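/- Let p ≥ 1 affine maps f_i(x) = A_i x + b_i on ℝ^D, let K_0 be a nonempty compact subset of ℝ^D, and suppose the normalizing sequence (d_n)_n of the renormalized Hutchinson orbit of K_0 converges to d with d > λ_H = max_{1≤i≤p} ‖A_i‖. Then ρ({(d·Id − A_1)^{-1} b_1, …, (d·Id − A_p)^{-1} b_p}) ≤ 1. Moreover, if A_i = α_i·Id with α_i ≥ 0 for all i ∈ {1,…,p}, then this inequality is an equality, and in this case at least one b_i is nonzero. -/

import Mathlib

/-!
Fix `i` and follow one point along the orbit by always applying `f_i`: `y₀ ∈ K₀` and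
`y_{n+1} = d_n⁻¹ f_i(y_n) ∈ K_{n+1}`, which lies in the closed unit ball. Since `d_n → d > ‖A_i‖`,
the maps `y ↦ d_n⁻¹ f_i(y)` are eventually uniform contractions converging to `y ↦ d⁻¹ f_i(y)`,
whose fixed point is the solution `x_i` of `(d·Id − A_i) x = b_i`; hence `y_n → x_i` and
`‖x_i‖ ≤ 1`. When `A_i = α_i·Id` with `α_i ≥ 0`, the unit-ball bound gives
`d_{n+1} ≤ max_i (α_i + ‖b_i‖)`, so `d ≤ α_j + ‖b_j‖` for some `j`, that is
`‖x_j‖ = ‖b_j‖ / (d − α_j) ≥ 1`, and `b_j ≠ 0` because `α_j < d`.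
-/

open Metric Filter Pointwise Topology

noncomputable section

/-- The radius function `ρ(K) = sup {‖x‖ : x ∈ K}`. -/
def rad {D : ℕ} (K : Set (EuclideanSpace ℝ (Fin D))) : ℝ := sSup (norm '' K)

/-- The Hutchinson operator `H(K) = ⋃ i, f i '' K`. -/
def hutch {D p : ℕ} (f : Fin (p + 1) → EuclideanSpace ℝ (Fin D) → EuclideanSpace ℝ (Fin D))
    (K : Set (EuclideanSpace ℝ (Fin D))) : Set (EuclideanSpace ℝ (Fin D)) := ⋃ i, f i '' K

/-- The renormalized Hutchinson operator `H_ρ(K) = ρ(H(K))⁻¹ • H(K)`. -/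
def hutchRho {D p : ℕ} (f : Fin (p + 1) → EuclideanSpace ℝ (Fin D) → EuclideanSpace ℝ (Fin D))
    (K : Set (EuclideanSpace ℝ (Fin D))) : Set (EuclideanSpace ℝ (Fin D)) :=
  (rad (hutch f K))⁻¹ • hutch f K

theorem tendsto_zero_of_le_mul_add {e ε : ℕ → ℝ} {q : ℝ} (hq₀ : 0 ≤ q) (hq : q < 1)
    (he : ∀ n, 0 ≤ e n) (hε : Tendsto ε atTop (𝓝 0))
    (hrec : ∀ᶠ n in atTop, e (n + 1) ≤ q * e n + ε n) : Tendsto e atTop (𝓝 0) := by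
  refine tendsto_order.2 ⟨fun a ha => .of_forall fun n => ha.trans_le (he n), fun z hz => ?_⟩
  have hδ : 0 < (1 - q) * z / 2 := by have := sub_pos.2 hq; positivity
  obtain ⟨N, hN⟩ := eventually_atTop.1 (hrec.and (hε.eventually (gt_mem_nhds hδ)))
  have hbound : ∀ k, e (k + N) ≤ q ^ k * e N + z / 2 := by
    intro k
    induction k with
    | zero => simp only [zero_add, pow_zero, one_mul]; linarith
    | succ k ih =>
      obtain ⟨hstep, hsmall⟩ := hN (k + N) (Nat.le_add_left N k)
      calc e (k + 1 + N) = e (k + N + 1) := by rw [Nat.add_right_comm]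
        _ ≤ q * (q ^ k * e N + z / 2) + (1 - q) * z / 2 := by nlinarith
        _ = q ^ (k + 1) * e N + z / 2 := by ring
  have hgeom : ∀ᶠ k in atTop, q ^ k * e N < z / 2 := by
    have := (tendsto_pow_atTop_nhds_zero_of_lt_one hq₀ hq).mul_const (e N)
    rw [zero_mul] at this
    exact this.eventually (gt_mem_nhds (half_pos hz))
  filter_upwards [(tendsto_sub_atTop_nat N).eventually hgeom, eventually_ge_atTop N] with n hn hNn
  have := hbound (n - N)
  rw [Nat.sub_add_cancel hNn] at this
  linarith

theorem tendsto_of_inv_smul_affine_recursion {E : Type*} [NormedAddCommGroup E] [NormedSpace ℝ E]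
    (A : E →L[ℝ] E) (b : E) {c : ℕ → ℝ} {d : ℝ} (hc : Tendsto c atTop (𝓝 d)) (hAd : ‖A‖ < d)
    {x : E} (hx : d • x = A x + b) {y : ℕ → E} (hy : ∀ n, y (n + 1) = (c n)⁻¹ • (A (y n) + b)) :
    Tendsto y atTop (𝓝 x) := by
  have hd : 0 < d := (norm_nonneg A).trans_lt hAd
  have hcinv : Tendsto (fun n => (c n)⁻¹) atTop (𝓝 d⁻¹) := hc.inv₀ hd.ne'
  have hx' : x = d⁻¹ • (A x + b) := by rw [← hx, inv_smul_smul₀ hd.ne']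
  have hstep : ∀ n, ‖y (n + 1) - x‖
      ≤ ‖(c n)⁻¹‖ * ‖A‖ * ‖y n - x‖ + ‖((c n)⁻¹ - d⁻¹) • (A x + b)‖ := by
    intro n
    have hsplit : y (n + 1) - x = (c n)⁻¹ • A (y n - x) + ((c n)⁻¹ - d⁻¹) • (A x + b) := by
      rw [hy, map_sub]
      nth_rewrite 1 [hx']
      module
    rw [hsplit, mul_assoc]
    refine (norm_add_le _ _).trans (add_le_add_left ?_ _)
    rw [norm_smul]
    gcongr
    exact A.le_opNorm _
  obtain ⟨q, hq_gt, hq_lt⟩ : ∃ q, ‖d⁻¹‖ * ‖A‖ < q ∧ q < 1 := by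
    refine exists_between ?_
    rw [norm_inv, Real.norm_of_nonneg hd.le, inv_mul_lt_one₀ hd]
    exact hAd
  have hcoef : ∀ᶠ n in atTop, ‖(c n)⁻¹‖ * ‖A‖ < q :=
    (hcinv.norm.mul_const ‖A‖).eventually (gt_mem_nhds hq_gt)
  have hnoise : Tendsto (fun n => ‖((c n)⁻¹ - d⁻¹) • (A x + b)‖) atTop (𝓝 0) := by
    simpa using ((hcinv.sub_const d⁻¹).smul_const (A x + b)).norm
  rw [tendsto_iff_norm_sub_tendsto_zero]
  have hq₀ : 0 ≤ q := (by positivity : (0 : ℝ) ≤ ‖d⁻¹‖ * ‖A‖).trans hq_gt.le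
  refine tendsto_zero_of_le_mul_add hq₀ hq_lt (fun n => norm_nonneg _) hnoise ?_
  filter_upwards [hcoef] with n hn
  exact (hstep n).trans (by gcongr)

section Radius

variable {D : ℕ} {K : Set (EuclideanSpace ℝ (Fin D))}

theorem norm_le_rad (hK : BddAbove (norm '' K)) {x : EuclideanSpace ℝ (Fin D)} (hx : x ∈ K) :
    ‖x‖ ≤ rad K :=
  le_csSup hK ⟨x, hx, rfl⟩

theorem rad_le {r : ℝ} (hr : 0 ≤ r) (h : ∀ x ∈ K, ‖x‖ ≤ r) : rad K ≤ r :=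
  Real.sSup_le (by rintro _ ⟨x, hx, rfl⟩; exact h x hx) hr

theorem nontrivial_of_rad_pos (h : 0 < rad K) : Nontrivial (EuclideanSpace ℝ (Fin D)) := by
  by_contra htriv
  rw [not_nontrivial_iff_subsingleton] at htriv
  exact h.not_ge (rad_le le_rfl fun x _ => by simp [Subsingleton.elim x 0])

end Radius

section Hutchinson

variable {D p : ℕ} {f : Fin (p + 1) → EuclideanSpace ℝ (Fin D) → EuclideanSpace ℝ (Fin D)}
  {K : Set (EuclideanSpace ℝ (Fin D))}

theorem apply_mem_hutch (i : Fin (p + 1)) {x : EuclideanSpace ℝ (Fin D)} (hx : x ∈ K) :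
    f i x ∈ hutch f K :=
  Set.mem_iUnion.2 ⟨i, Set.mem_image_of_mem _ hx⟩

theorem rad_hutch_le {M : ℝ} (hM : 0 ≤ M) (h : ∀ i, ∀ x ∈ K, ‖f i x‖ ≤ M) : rad (hutch f K) ≤ M :=
  rad_le hM fun _ hz => by
    obtain ⟨i, x, hx, rfl⟩ := Set.mem_iUnion.1 hz
    exact h i x hx

theorem isCompact_iterate_hutchRho (hf : ∀ i, Continuous (f i)) (hK : IsCompact K) (n : ℕ) :
    IsCompact ((hutchRho f)^[n] K) := by
  induction n with
  | zero => exact hK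
  | succ n ih =>
    rw [Function.iterate_succ_apply']
    exact (isCompact_iUnion fun i => ih.image (hf i)).smul _

theorem norm_le_one_of_mem_hutchRho (hK : BddAbove (norm '' hutch f K))
    (hpos : 0 < rad (hutch f K)) {x : EuclideanSpace ℝ (Fin D)} (hx : x ∈ hutchRho f K) :
    ‖x‖ ≤ 1 := by
  obtain ⟨z, hz, rfl⟩ := hx
  rw [norm_smul, norm_inv, Real.norm_of_nonneg hpos.le, inv_mul_le_one₀ hpos]
  exact norm_le_rad hK hz

theorem norm_le_one_of_mem_iterate_hutchRho (hf : ∀ i, Continuous (f i)) (hK : IsCompact K)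
    {n : ℕ} (hpos : 0 < rad (hutch f ((hutchRho f)^[n] K)))
    {x : EuclideanSpace ℝ (Fin D)} (hx : x ∈ (hutchRho f)^[n + 1] K) : ‖x‖ ≤ 1 := by
  rw [Function.iterate_succ_apply'] at hx
  have hbdd : BddAbove (norm '' hutch f ((hutchRho f)^[n] K)) :=
    ((isCompact_iUnion fun i => (isCompact_iterate_hutchRho hf hK n).image (hf i)).image
      continuous_norm).bddAbove
  exact norm_le_one_of_mem_hutchRho hbdd hpos hx

theorem exists_seq_mem_iterate_hutchRho (i : Fin (p + 1)) (hK : K.Nonempty) :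
    ∃ y : ℕ → EuclideanSpace ℝ (Fin D), (∀ n, y n ∈ (hutchRho f)^[n] K) ∧
      ∀ n, y (n + 1) = (rad (hutch f ((hutchRho f)^[n] K)))⁻¹ • f i (y n) := by
  obtain ⟨y₀, hy₀⟩ := hK
  refine ⟨fun n => Nat.rec y₀ (fun n y => (rad (hutch f ((hutchRho f)^[n] K)))⁻¹ • f i y) n,
    fun n => ?_, fun n => rfl⟩
  induction n with
  | zero => exact hy₀
  | succ n ih =>
    rw [Function.iterate_succ_apply']
    exact Set.smul_mem_smul_set (apply_mem_hutch i ih)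

end Hutchinson

section Affine

variable {D p : ℕ} {A : Fin (p + 1) → EuclideanSpace ℝ (Fin D) →L[ℝ] EuclideanSpace ℝ (Fin D)}
  {b : Fin (p + 1) → EuclideanSpace ℝ (Fin D)}
  {f : Fin (p + 1) → EuclideanSpace ℝ (Fin D) → EuclideanSpace ℝ (Fin D)}
  {K : Set (EuclideanSpace ℝ (Fin D))} {d : ℝ}

theorem norm_le_one_of_smul_sub_eq (hf : ∀ i x, f i x = A i x + b i) (hKc : IsCompact K)
    (hKne : K.Nonempty) (hpos : ∀ n, 0 < rad (hutch f ((hutchRho f)^[n] K)))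
    (hd : Tendsto (fun n => rad (hutch f ((hutchRho f)^[n] K))) atTop (𝓝 d))
    {i : Fin (p + 1)} (hAd : ‖A i‖ < d) {x : EuclideanSpace ℝ (Fin D)}
    (hx : d • x - A i x = b i) : ‖x‖ ≤ 1 := by
  have hfc : ∀ i, Continuous (f i) := fun i => by
    rw [show f i = fun x => A i x + b i from funext (hf i)]
    fun_prop
  obtain ⟨y, hyK, hy⟩ := exists_seq_mem_iterate_hutchRho (f := f) i hKne
  have hlim : Tendsto y atTop (𝓝 x) :=
    tendsto_of_inv_smul_affine_recursion (A i) (b i) hd hAd (by rw [← hx]; abel)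
      fun n => by rw [hy, hf]
  exact le_of_tendsto ((hlim.comp (tendsto_add_atTop_nat 1)).norm)
    (.of_forall fun n => norm_le_one_of_mem_iterate_hutchRho hfc hKc (hpos n) (hyK (n + 1)))

theorem exists_le_add_norm_of_eq_smul_add {α : Fin (p + 1) → ℝ} (hα : ∀ i, 0 ≤ α i)
    (hf : ∀ i x, f i x = α i • x + b i) (hKc : IsCompact K)
    (hpos : ∀ n, 0 < rad (hutch f ((hutchRho f)^[n] K)))
    (hd : Tendsto (fun n => rad (hutch f ((hutchRho f)^[n] K))) atTop (𝓝 d)) :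
    ∃ j, d ≤ α j + ‖b j‖ := by
  have hfc : ∀ i, Continuous (f i) := fun i => by
    rw [show f i = fun x => α i • x + b i from funext (hf i)]
    fun_prop
  set M := Finset.univ.sup' Finset.univ_nonempty fun i => α i + ‖b i‖
  have hle : ∀ i, α i + ‖b i‖ ≤ M := fun i =>
    Finset.le_sup' (fun i => α i + ‖b i‖) (Finset.mem_univ i)
  have hrad : ∀ n, rad (hutch f ((hutchRho f)^[n + 1] K)) ≤ M := fun n =>
    rad_hutch_le ((add_nonneg (hα 0) (norm_nonneg _)).trans (hle 0)) fun i x hx => by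
      have hx1 := norm_le_one_of_mem_iterate_hutchRho hfc hKc (hpos n) hx
      calc ‖f i x‖ ≤ ‖α i • x‖ + ‖b i‖ := hf i x ▸ norm_add_le _ _
        _ = α i * ‖x‖ + ‖b i‖ := by rw [norm_smul, Real.norm_of_nonneg (hα i)]
        _ ≤ M := by nlinarith [hle i, hα i]
  have hdM : d ≤ M := le_of_tendsto (hd.comp (tendsto_add_atTop_nat 1)) (.of_forall hrad)
  simpa [M, Finset.le_sup'_iff] using hdM

end Affine

/-- Proposition `prop:limerho`. If `(d_n)` converges to `d > λ_H` then
`ρ({(d·Id − A_1)⁻¹b_1, …, (d·Id − A_p)⁻¹b_p}) ≤ 1` (the set of the solutions `x` of the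
equations `(d·Id − A_i) x = b_i`); moreover if all `A_i = α_i·Id` with `α_i ≥ 0` then this
inequality is an equality and at least one `b_i` is nonzero. -/
theorem stmt4 {D p : ℕ}
    (A : Fin (p + 1) → EuclideanSpace ℝ (Fin D) →L[ℝ] EuclideanSpace ℝ (Fin D))
    (b : Fin (p + 1) → EuclideanSpace ℝ (Fin D))
    (f : Fin (p + 1) → EuclideanSpace ℝ (Fin D) → EuclideanSpace ℝ (Fin D))
    (hf : ∀ i x, f i x = A i x + b i)
    (K₀ : Set (EuclideanSpace ℝ (Fin D))) (hK₀c : IsCompact K₀) (hK₀ne : K₀.Nonempty)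
    (hpos : ∀ n, 0 < rad (hutch f ((hutchRho f)^[n] K₀)))
    (d : ℝ) (hd : Tendsto (fun n => rad (hutch f ((hutchRho f)^[n] K₀))) atTop (𝓝 d))
    (hdgt : Finset.univ.sup' Finset.univ_nonempty (fun i => ‖A i‖) < d) :
    rad {x | ∃ i, d • x - A i x = b i} ≤ 1 ∧
    ((∃ α : Fin (p + 1) → ℝ, (∀ i, 0 ≤ α i) ∧
        ∀ i, A i = α i • ContinuousLinearMap.id ℝ (EuclideanSpace ℝ (Fin D))) →
      rad {x | ∃ i, d • x - A i x = b i} = 1 ∧ ∃ i, b i ≠ 0) := by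
  have hA_lt : ∀ i, ‖A i‖ < d := fun i => (Finset.le_sup' _ (Finset.mem_univ i)).trans_lt hdgt
  have hsol : ∀ x ∈ {x | ∃ i, d • x - A i x = b i}, ‖x‖ ≤ 1 := fun x ⟨i, hx⟩ =>
    norm_le_one_of_smul_sub_eq hf hK₀c hK₀ne hpos hd (hA_lt i) hx
  refine ⟨rad_le zero_le_one hsol, ?_⟩
  rintro ⟨α, hα, hαA⟩
  have hAα : ∀ i y, A i y = α i • y := fun i y => by rw [hαA]; rfl
  have := nontrivial_of_rad_pos (hpos 0)
  have hα_lt : ∀ i, α i < d := fun i => by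
    simpa [hαA, norm_smul, abs_of_nonneg (hα i)] using hA_lt i
  obtain ⟨j, hj⟩ := exists_le_add_norm_of_eq_smul_add hα (fun i x => by rw [hf, hAα]) hK₀c hpos hd
  have hdα : 0 < d - α j := sub_pos.2 (hα_lt j)
  have hxj : (d - α j)⁻¹ • b j ∈ {x | ∃ i, d • x - A i x = b i} :=
    ⟨j, by rw [hAα, ← sub_smul, smul_inv_smul₀ hdα.ne']⟩
  have hxj_norm : 1 ≤ ‖(d - α j)⁻¹ • b j‖ := by
    rw [norm_smul, norm_inv, Real.norm_of_nonneg hdα.le, one_le_inv_mul₀ hdα]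
    linarith
  refine ⟨(rad_le zero_le_one hsol).antisymm (hxj_norm.trans (norm_le_rad ⟨1, ?_⟩ hxj)), j, ?_⟩
  · rintro _ ⟨x, hx, rfl⟩
    exact hsol x hx
  · rintro hb
    rw [hb, norm_zero] at hj
    linarith [hα_lt j]
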